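/- Determinism: the Juliette small-step semantics is deterministic. For every global method table M_g and expression e: if ⟨M_g, e⟩ → ⟨M_g1, e1⟩ and ⟨M_g, e⟩ → ⟨M_g2, e2⟩, then M_g1 = M_g2 and e1 = e2; and it is not the case that both ⟨M_g, e⟩ → ⟨M_g', e'⟩ (for some M_g', e') and ⟨M_g, e⟩ → error. -/

import Mathlib

namespace Juliette

/-- Type tags. -/
inductive Tag where
  | unit
  | fn (m : String)
  | int
deriving DecidableEq

/-- Type annotations: tags plus the top annotation `Any`. -/
inductive Ty where
  | any
  | tag (σ : Tag)
deriving DecidableEq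

/-- Values: unit, function values, and base (integer) values. -/
inductive Val where
  | unit
  | fn (m : String)
  | int (n : Int)
deriving DecidableEq

def Val.typeof : Val → Tag
  | .unit => .unit
  | .fn m => .fn m
  | .int _ => .int

/-- Subtyping on annotations: τ <: Any, and tags are subtypes iff equal. -/
def Ty.sub : Ty → Ty → Bool
  | _, .any => true
  | .any, .tag _ => false
  | .tag σ₁, .tag σ₂ => σ₁ == σ₂

/-- Juliette expressions.  A method table is a list of method definitions
    (name, parameters with annotations, body); the head of the list is the
    newest definition. -/
inductive Expr where
  | val (v : Val)
  | var (x : String)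
  | seq (e₁ e₂ : Expr)
  | primCall (δ : String) (args : List Expr)
  | call (f : Expr) (args : List Expr)
  | mdef (m : String) (params : List (String × Ty)) (body : Expr)
  | evalGlobal (e : Expr)
  | evalLocal (tbl : List (String × List (String × Ty) × Expr)) (e : Expr)

/-- Method definitions and method tables. -/
abbrev MDef := String × List (String × Ty) × Expr
abbrev Table := List MDef

def MDef.toExpr (md : MDef) : Expr := .mdef md.1 md.2.1 md.2.2

def MDef.tys (md : MDef) : List Ty := md.2.1.map Prod.snd

-- Method names referenced by an expression.
mutual
def Expr.refs : Expr → List String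
  | .val (.fn m) => [m]
  | .val _ => []
  | .var _ => []
  | .seq e₁ e₂ => e₁.refs ++ e₂.refs
  | .primCall _ es => Expr.refsList es
  | .call f es => f.refs ++ Expr.refsList es
  | .mdef m _ b => m :: b.refs
  | .evalGlobal e => e.refs
  | .evalLocal tbl e => Expr.refsTbl tbl ++ e.refs

def Expr.refsList : List Expr → List String
  | [] => []
  | e :: es => e.refs ++ Expr.refsList es

def Expr.refsTbl : List (String × List (String × Ty) × Expr) → List String
  | [] => []
  | (m, _, b) :: rest => m :: (b.refs ++ Expr.refsTbl rest)
end

-- Substitution of expressions for variables.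
mutual
def Expr.subst (ρ : String → Option Expr) : Expr → Expr
  | .val v => .val v
  | .var x => (ρ x).getD (.var x)
  | .seq e₁ e₂ => .seq (e₁.subst ρ) (e₂.subst ρ)
  | .primCall δ es => .primCall δ (Expr.substList ρ es)
  | .call f es => .call (f.subst ρ) (Expr.substList ρ es)
  | .mdef m ps b =>
      .mdef m ps (b.subst (fun x => if ps.any (fun p => p.1 == x) then none else ρ x))
  | .evalGlobal e => .evalGlobal (e.subst ρ)
  | .evalLocal tbl e => .evalLocal tbl (e.subst ρ)

def Expr.substList (ρ : String → Option Expr) : List Expr → List Expr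
  | [] => []
  | e :: es => e.subst ρ :: Expr.substList ρ es
end
/-- σ̄ <: τ̄ pointwise (with matching lengths). -/
def subTags (σs : List Tag) (τs : List Ty) : Bool :=
  σs.length == τs.length && (σs.zip τs).all (fun p => Ty.sub (.tag p.1) p.2)

def subTys (a b : List Ty) : Bool :=
  a.length == b.length && (a.zip b).all (fun p => p.1.sub p.2)

def tysEquiv (a b : List Ty) : Bool := subTys a b && subTys b a

/-- A newer definition shadows an older one with the same name and
    pairwise-equivalent argument annotations. -/
def shadows (newer older : MDef) : Bool :=
  newer.1 == older.1 && tysEquiv newer.tys older.tys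

/-- Un-shadowed definitions of a table (head is newest). -/
def latest : Table → List MDef
  | [] => []
  | md :: rest => md :: (latest rest).filter (fun md' => !(shadows md md'))

def applicable (mds : List MDef) (m : String) (σs : List Tag) : List MDef :=
  mds.filter (fun md => md.1 == m && subTags σs md.tys)

/-- Method dispatch: the most specific applicable un-shadowed method,
    `none` on dispatch error. -/
def getmd (M : Table) (m : String) (σs : List Tag) : Option MDef :=
  let app := applicable (latest M) m σs
  app.find? (fun md => app.all (fun md' => subTys md.tys md'.tys))

/-- Simple evaluation contexts. -/
inductive SCtx where
  | hole
  | seq (X : SCtx) (e : Expr)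
  | primArg (δ : String) (vs : List Val) (X : SCtx) (es : List Expr)
  | callee (X : SCtx) (es : List Expr)
  | callArg (v : Val) (vs : List Val) (X : SCtx) (es : List Expr)

def SCtx.plug : SCtx → Expr → Expr
  | .hole, e => e
  | .seq X e₂, e => .seq (X.plug e) e₂
  | .primArg δ vs X es, e => .primCall δ (vs.map Expr.val ++ X.plug e :: es)
  | .callee X es, e => .call (X.plug e) es
  | .callArg v vs X es, e => .call (.val v) (vs.map Expr.val ++ X.plug e :: es)

/-- World evaluation contexts: C ::= X | X[⦅C⦆] | X[⟨C⟩_M]. -/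
inductive WCtx where
  | simple (X : SCtx)
  | evalG (X : SCtx) (C : WCtx)
  | evalL (X : SCtx) (M : Table) (C : WCtx)

def WCtx.plug : WCtx → Expr → Expr
  | .simple X, e => X.plug e
  | .evalG X C, e => X.plug (.evalGlobal (C.plug e))
  | .evalL X M C, e => X.plug (.evalLocal M (C.plug e))

/-- Composition of simple contexts: (X₁.comp X₂)[e] = X₁[X₂[e]]. -/
def SCtx.comp : SCtx → SCtx → SCtx
  | .hole, X₂ => X₂
  | .seq X e, X₂ => .seq (X.comp X₂) e
  | .primArg δ vs X es, X₂ => .primArg δ vs (X.comp X₂) es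
  | .callee X es, X₂ => .callee (X.comp X₂) es
  | .callArg v vs X es, X₂ => .callArg v vs (X.comp X₂) es

/-- Wrapping a world context in an outer simple frame: C.under F = F[C]. -/
def WCtx.under : WCtx → SCtx → WCtx
  | .simple X, F => .simple (F.comp X)
  | .evalG X C, F => .evalG (F.comp X) C
  | .evalL X M C, F => .evalL (F.comp X) M C

/-- Composition of world contexts: (C₁.comp C₂)[e] = C₁[C₂[e]]. -/
def WCtx.comp : WCtx → WCtx → WCtx
  | .simple X, C₂ => C₂.under X
  | .evalG X C₁, C₂ => .evalG X (C₁.comp C₂)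
  | .evalL X M C₁, C₂ => .evalL X M (C₁.comp C₂)

/-- A generic function call m(v̄). -/
def mkCall (m : String) (vs : List Val) : Expr := .call (.val (.fn m)) (vs.map Expr.val)

/-- Redex bases. -/
inductive Redex where
  | var (x : String)
  | seqV (v : Val) (e : Expr)
  | primC (δ : String) (vs : List Val)
  | callNonFn (v : Val) (vs : List Val) (h : ∀ m, v ≠ .fn m)
  | mdefR (m : String) (ps : List (String × Ty)) (b : Expr)
  | globalVal (v : Val)
  | localVal (M : Table) (v : Val)
  | globalCall (X : SCtx) (m : String) (vs : List Val)
  | localCall (M : Table) (X : SCtx) (m : String) (vs : List Val)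

def Redex.toExpr : Redex → Expr
  | .var x => .var x
  | .seqV v e => .seq (.val v) e
  | .primC δ vs => .primCall δ (vs.map Expr.val)
  | .callNonFn v vs _ => .call (.val v) (vs.map Expr.val)
  | .mdefR m ps b => .mdef m ps b
  | .globalVal v => .evalGlobal (.val v)
  | .localVal M v => .evalLocal M (.val v)
  | .globalCall X m vs => .evalGlobal (X.plug (mkCall m vs))
  | .localCall M X m vs => .evalLocal M (X.plug (mkCall m vs))

/-- Environment binding formal parameters to argument expressions. -/
def bindArgs (ps : List (String × Ty)) (args : List Expr) : String → Option Expr :=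
  fun x => ((ps.map Prod.fst).zip args).lookup x

/-- The small-step relation ⟨M, e⟩ → ⟨M', e'⟩, parameterized by the
    interpretation Δ of primitive operators. -/
inductive Step (Δ : String → List Val → Option Val) : Table → Expr → Table → Expr → Prop where
  | seqStep (M : Table) (C : WCtx) (v : Val) (e : Expr) :
      Step Δ M (C.plug (.seq (.val v) e)) M (C.plug e)
  | primStep {δ : String} {vs : List Val} {v' : Val} (M : Table) (C : WCtx)
      (h : Δ δ vs = some v') :
      Step Δ M (C.plug (.primCall δ (vs.map Expr.val))) M (C.plug (.val v'))
  | mdefStep (M : Table) (C : WCtx) (m : String) (ps : List (String × Ty)) (b : Expr) :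
      Step Δ M (C.plug (.mdef m ps b)) ((m, ps, b) :: M) (C.plug (.val (.fn m)))
  | callGlobal (M : Table) (C : WCtx) (X : SCtx) (m : String) (vs : List Val) :
      Step Δ M (C.plug (.evalGlobal (X.plug (mkCall m vs)))) M
               (C.plug (.evalGlobal (X.plug (.evalLocal M (mkCall m vs)))))
  | callLocal {M' : Table} {m : String} {vs : List Val} {md : MDef}
      (M : Table) (C : WCtx) (X : SCtx)
      (h : getmd M' m (vs.map Val.typeof) = some md) :
      Step Δ M (C.plug (.evalLocal M' (X.plug (mkCall m vs)))) M
               (C.plug (.evalLocal M' (X.plug (md.2.2.subst (bindArgs md.2.1 (vs.map Expr.val))))))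
  | valGlobal (M : Table) (C : WCtx) (v : Val) :
      Step Δ M (C.plug (.evalGlobal (.val v))) M (C.plug (.val v))
  | valLocal (M M' : Table) (C : WCtx) (v : Val) :
      Step Δ M (C.plug (.evalLocal M' (.val v))) M (C.plug (.val v))

/-- The error step ⟨M, e⟩ → error. -/
inductive StepErr (Δ : String → List Val → Option Val) : Table → Expr → Prop where
  | varErr (M : Table) (C : WCtx) (x : String) :
      StepErr Δ M (C.plug (.var x))
  | primErr {δ : String} {vs : List Val} (M : Table) (C : WCtx)
      (h : Δ δ vs = none) :
      StepErr Δ M (C.plug (.primCall δ (vs.map Expr.val)))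
  | calleeErr {v : Val} (M : Table) (C : WCtx) (vs : List Val)
      (h : ∀ m, v ≠ Val.fn m) :
      StepErr Δ M (C.plug (.call (.val v) (vs.map Expr.val)))
  | callErr {M' : Table} {m : String} {vs : List Val} (M : Table) (C : WCtx) (X : SCtx)
      (h : getmd M' m (vs.map Val.typeof) = none) :
      StepErr Δ M (C.plug (.evalLocal M' (X.plug (mkCall m vs))))

/-- Reflexive-transitive closure of the small-step relation. -/
inductive Steps (Δ : String → List Val → Option Val) : Table → Expr → Table → Expr → Prop where
  | refl (M : Table) (e : Expr) : Steps Δ M e M e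
  | tail {M e M' e' M'' e''} : Steps Δ M e M' e' → Step Δ M' e' M'' e'' → Steps Δ M e M'' e''
/-- Canonical representations. -/
inductive Rep where
  | V (v : Val)
  | X (X : SCtx)
  | C (C : WCtx)

/-- The canonical-form judgment Can(e, rep). -/
inductive Can : Expr → Rep → Prop where
  | val (v : Val) : Can (.val v) (.V v)
  | call (m : String) (vs : List Val) : Can (mkCall m vs) (.X .hole)
  | redex (r : Redex) : Can r.toExpr (.C (.simple .hole))
  | seqX {e₁ : Expr} {X₁ : SCtx} (e₂ : Expr) :
      Can e₁ (.X X₁) → Can (.seq e₁ e₂) (.X (.seq X₁ e₂))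
  | primX {eᵢ : Expr} {Xᵢ : SCtx} (δ : String) (vs : List Val) (es : List Expr) :
      Can eᵢ (.X Xᵢ) →
      Can (.primCall δ (vs.map Expr.val ++ eᵢ :: es)) (.X (.primArg δ vs Xᵢ es))
  | calleeX {e_c : Expr} {X_c : SCtx} (es : List Expr) :
      Can e_c (.X X_c) → Can (.call e_c es) (.X (.callee X_c es))
  | callX {eᵢ : Expr} {Xᵢ : SCtx} (m : String) (vs : List Val) (es : List Expr) :
      Can eᵢ (.X Xᵢ) →
      Can (.call (.val (.fn m)) (vs.map Expr.val ++ eᵢ :: es))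
          (.X (.callArg (.fn m) vs Xᵢ es))
  | seqC {e₁ : Expr} {C₁ : WCtx} (e₂ : Expr) :
      Can e₁ (.C C₁) → Can (.seq e₁ e₂) (.C (C₁.under (.seq .hole e₂)))
  | primC {eᵢ : Expr} {Cᵢ : WCtx} (δ : String) (vs : List Val) (es : List Expr) :
      Can eᵢ (.C Cᵢ) →
      Can (.primCall δ (vs.map Expr.val ++ eᵢ :: es)) (.C (Cᵢ.under (.primArg δ vs .hole es)))
  | calleeC {e_c : Expr} {C_c : WCtx} (es : List Expr) :
      Can e_c (.C C_c) → Can (.call e_c es) (.C (C_c.under (.callee .hole es)))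
  | callC {eᵢ : Expr} {Cᵢ : WCtx} (m : String) (vs : List Val) (es : List Expr) :
      Can eᵢ (.C Cᵢ) →
      Can (.call (.val (.fn m)) (vs.map Expr.val ++ eᵢ :: es))
          (.C (Cᵢ.under (.callArg (.fn m) vs .hole es)))
  | evalGC {e : Expr} {C : WCtx} :
      Can e (.C C) → Can (.evalGlobal e) (.C (.evalG .hole C))
  | evalLC {e : Expr} {C : WCtx} (M : Table) :
      Can e (.C C) → Can (.evalLocal M e) (.C (.evalL .hole M C))
/-- Typing environments map variables to type annotations. -/
abbrev TyEnv := String → Option Ty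

def emptyEnv : TyEnv := fun _ => none

/-- Concrete typing Γ ⊢ e : σ, parameterized by the return-tag function Δτ
    of primitive operators. -/
inductive HasTy (Δτ : String → List Tag → Option Tag) : TyEnv → Expr → Tag → Prop where
  | var {Γ : TyEnv} {x : String} {σ : Tag} :
      Γ x = some (.tag σ) → HasTy Δτ Γ (.var x) σ
  | val {Γ : TyEnv} (v : Val) : HasTy Δτ Γ (.val v) v.typeof
  | mdefTy {Γ : TyEnv} (m : String) (ps : List (String × Ty)) (b : Expr) :
      HasTy Δτ Γ (.mdef m ps b) (.fn m)
  | seq {Γ : TyEnv} {e₂ : Expr} {σ : Tag} (e₁ : Expr) :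
      HasTy Δτ Γ e₂ σ → HasTy Δτ Γ (.seq e₁ e₂) σ
  | primop {Γ : TyEnv} {δ : String} {es : List Expr} {σs : List Tag} {σ' : Tag} :
      es.length = σs.length →
      (∀ p ∈ es.zip σs, HasTy Δτ Γ p.1 p.2) →
      Δτ δ σs = some σ' →
      HasTy Δτ Γ (.primCall δ es) σ'
  | evalG {Γ : TyEnv} {e : Expr} {σ : Tag} :
      HasTy Δτ Γ e σ → HasTy Δτ Γ (.evalGlobal e) σ
  | evalL {Γ : TyEnv} {e : Expr} {σ : Tag} (M : Table) :
      HasTy Δτ Γ e σ → HasTy Δτ Γ (.evalLocal M e) σ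

/-- Δτ agrees with Δ: the tag of a primop's result is given by Δτ. -/
def Agrees (Δ : String → List Val → Option Val)
    (Δτ : String → List Tag → Option Tag) : Prop :=
  ∀ δ vs v', Δ δ vs = some v' → Δτ δ (vs.map Val.typeof) = some v'.typeof

/-- m is the name of some method defined in M. -/
def nameInTable (m : String) (M : Table) : Prop := ∃ md ∈ M, md.1 = m

/-- m occurs in M: either as a defined name or referenced in some body. -/
def occursInTable (m : String) (M : Table) : Prop :=
  ∃ md ∈ M, md.1 = m ∨ m ∈ Expr.refs md.2.2

/-- Every method name referenced by e occurs in M iff it occurs in M'. -/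
def compat (e : Expr) (M M' : Table) : Prop :=
  ∀ m ∈ e.refs, (nameInTable m M ↔ nameInTable m M')

/-- Method-optimization environments: entries m[σ̄] ≡ m'. -/
abbrev OptEnv := List (String × List Tag × String)

/-- Near-values: values or variables. -/
inductive NearVal where
  | val (v : Val)
  | var (x : String)

def NearVal.toExpr : NearVal → Expr
  | .val v => .val v
  | .var x => .var x

/-- Typing environment x̄ : τ̄ from a parameter list. -/
def paramEnv (ps : List (String × Ty)) : TyEnv := fun x => ps.lookup x

/-- Typing environment x̄ : σ̄ binding parameter names to tags. -/
def tagEnv (ps : List (String × Ty)) (σs : List Tag) : TyEnv :=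
  fun x => ((ps.map Prod.fst).zip (σs.map Ty.tag)).lookup x

/-- Renaming substitution [x̄' := x̄] from the parameters of one definition
    to those of another. -/
def renameEnv (fromPs toPs : List (String × Ty)) : String → Option Expr :=
  fun x => ((fromPs.map Prod.fst).zip ((toPs.map Prod.fst).map Expr.var)).lookup x

/-- Expression optimization Φ; Γ ⊢ M, e ↝ M', e'. -/
inductive Opt (Δτ : String → List Tag → Option Tag) (Φ : OptEnv) (M M' : Table) :
    TyEnv → Expr → Expr → Prop where
  | valNonFn {Γ : TyEnv} {v : Val} (h : ∀ m, v ≠ Val.fn m) :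
      Opt Δτ Φ M M' Γ (.val v) (.val v)
  | valFn {Γ : TyEnv} (m : String) (h : compat (.val (.fn m)) M M') :
      Opt Δτ Φ M M' Γ (.val (.fn m)) (.val (.fn m))
  | var {Γ : TyEnv} (x : String) : Opt Δτ Φ M M' Γ (.var x) (.var x)
  | evalG {Γ : TyEnv} (e : Expr) (h : compat e M M') :
      Opt Δτ Φ M M' Γ (.evalGlobal e) (.evalGlobal e)
  | evalL {Γ : TyEnv} (Ml : Table) (e : Expr) (h : compat e M M') :
      Opt Δτ Φ M M' Γ (.evalLocal Ml e) (.evalLocal Ml e)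
  | mdefO {Γ : TyEnv} (m : String) (ps : List (String × Ty)) (b : Expr)
      (h : compat (.val (.fn m)) M M') :
      Opt Δτ Φ M M' Γ (.mdef m ps b) (.mdef m ps b)
  | seq {Γ : TyEnv} {e₁ e₁' e₂ e₂' : Expr} :
      Opt Δτ Φ M M' Γ e₁ e₁' → Opt Δτ Φ M M' Γ e₂ e₂' →
      Opt Δτ Φ M M' Γ (.seq e₁ e₂) (.seq e₁' e₂')
  | primop {Γ : TyEnv} {es es' : List Expr} (δ : String) :
      es.length = es'.length →
      (∀ p ∈ es.zip es', Opt Δτ Φ M M' Γ p.1 p.2) →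
      Opt Δτ Φ M M' Γ (.primCall δ es) (.primCall δ es')
  | call {Γ : TyEnv} {e_c e_c' : Expr} {es es' : List Expr} :
      Opt Δτ Φ M M' Γ e_c e_c' →
      es.length = es'.length →
      (∀ p ∈ es.zip es', Opt Δτ Φ M M' Γ p.1 p.2) →
      Opt Δτ Φ M M' Γ (.call e_c es) (.call e_c' es')
  | inline {Γ : TyEnv} {m : String} {νs : List NearVal} {σs : List Tag}
      {md : MDef} {e' : Expr} :
      νs.length = σs.length →
      (∀ p ∈ νs.zip σs, HasTy Δτ Γ p.1.toExpr p.2) →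
      getmd M m σs = some md →
      Opt Δτ Φ M M' Γ (md.2.2.subst (bindArgs md.2.1 (νs.map NearVal.toExpr))) e' →
      Opt Δτ Φ M M' Γ (.call (.val (.fn m)) (νs.map NearVal.toExpr))
                      (.seq (.val .unit) e')
  | direct {Γ : TyEnv} {m m' : String} {es es' : List Expr} {σs : List Tag} :
      es.length = es'.length →
      es'.length = σs.length →
      (∀ p ∈ es.zip es', Opt Δτ Φ M M' Γ p.1 p.2) →
      (∀ p ∈ es'.zip σs, HasTy Δτ Γ p.1 p.2) →
      (m, σs, m') ∈ Φ →
      Opt Δτ Φ M M' Γ (.call (.val (.fn m)) es) (.call (.val (.fn m')) es')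

/-- md' optimizes md under (Φ, M, M'): same name and annotations, and the
    new body (with parameters renamed back) optimizes the old body. -/
def mdOpt (Δτ : String → List Tag → Option Tag) (Φ : OptEnv) (M M' : Table)
    (md md' : MDef) : Prop :=
  md'.1 = md.1 ∧ md'.tys = md.tys ∧ md.2.1.length = md'.2.1.length ∧
  Opt Δτ Φ M M' (paramEnv md.2.1) md.2.2 (md'.2.2.subst (renameEnv md'.2.1 md.2.1))

/-- Validity of an entry m[σ̄] ≡ m' of Φ for (Φ, M, M'). -/
def validEntry (Δτ : String → List Tag → Option Tag) (Φ : OptEnv) (M M' : Table)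
    (ent : String × List Tag × String) : Prop :=
  ∃ md md' : MDef,
    getmd M ent.1 ent.2.1 = some md ∧
    getmd M' ent.2.2 ent.2.1 = some md' ∧
    md.2.1.length = md'.2.1.length ∧
    Opt Δτ Φ M M' (tagEnv md.2.1 ent.2.1) md.2.2 (md'.2.2.subst (renameEnv md'.2.1 md.2.1))

/-- Table optimization Φ ⊢ M ↝ M'. -/
def TableOpt (Δτ : String → List Tag → Option Tag) (Φ : OptEnv) (M M' : Table) : Prop :=
  ∃ extra opts : Table,
    M' = extra ++ opts ∧
    List.Forall₂ (mdOpt Δτ Φ M M') M opts ∧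
    (∀ ent ∈ Φ, validEntry Δτ Φ M M' ent) ∧
    (∀ md ∈ extra, ¬ occursInTable md.1 M)

/-- Φ ⊢ e : M ↝ M'. -/
def TableOptE (Δτ : String → List Tag → Option Tag) (Φ : OptEnv) (e : Expr)
    (M M' : Table) : Prop :=
  TableOpt Δτ Φ M M' ∧ compat e M M'

/-- Γ ⊢ γ ok for a value substitution γ. -/
def substOk (Γ : TyEnv) (γ : String → Option Val) : Prop :=
  (∀ x, (Γ x).isSome ↔ (γ x).isSome) ∧
  (∀ x σ, Γ x = some (Ty.tag σ) ↔ ∃ v, γ x = some v ∧ v.typeof = σ)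

/-- Application of a value substitution to an expression. -/
def applySubst (γ : String → Option Val) (e : Expr) : Expr :=
  e.subst (fun x => (γ x).map Expr.val)

/-!
Determinism is unique decomposition. Evaluation contexts only descend into the leftmost
non-value subexpression, so an expression `e` has at most one decomposition `e = C[r]` into a
world context `C` and a redex `r`, and the premises of the rules for `r` then single out one
outcome: a step with a determined result, or an error. The decomposition is computed by
structural recursion and shown to invert plugging of a redex.
-/

def Expr.toVal : Expr → Option Val
  | .val v => some v
  | _ => none

def toVals (es : List Expr) : Option (List Val) := es.mapM Expr.toVal

/-- Outside every `⦅·⦆` and `⟨·⟩_M` a call `m(v̄)` is neither a redex nor an error. `decompose`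
returns it as a pseudo-redex in a simple context, and the innermost enclosing evaluation then
claims the whole `⦅X[m(v̄)]⦆` or `⟨X[m(v̄)]⟩_M` as its redex. -/
def isCallInSimpleCtx : WCtx → Expr → Bool
  | .simple _, .call (.val (.fn _)) args => (toVals args).isSome
  | _, _ => false

mutual
def decompose : Expr → Option (WCtx × Expr)
  | .val _ => none
  | .var x => some (.simple .hole, .var x)
  | .seq e₁ e₂ =>
      match e₁.toVal with
      | some _ => some (.simple .hole, .seq e₁ e₂)
      | none => (decompose e₁).map fun (C, r) => (C.under (.seq .hole e₂), r)
  | .primCall δ es =>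
      match decomposeArgs es with
      | none => some (.simple .hole, .primCall δ es)
      | some (vs, C, r, rest) => some (C.under (.primArg δ vs .hole rest), r)
  | .call f es =>
      match f.toVal with
      | some v =>
        match decomposeArgs es with
        | none => some (.simple .hole, .call f es)
        | some (vs, C, r, rest) => some (C.under (.callArg v vs .hole rest), r)
      | none => (decompose f).map fun (C, r) => (C.under (.callee .hole es), r)
  | .mdef m ps b => some (.simple .hole, .mdef m ps b)
  | .evalGlobal e =>
      match decompose e with
      | none => e.toVal.map fun _ => (.simple .hole, .evalGlobal e)
      | some (C, r) =>
          if isCallInSimpleCtx C r then some (.simple .hole, .evalGlobal e)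
          else some (.evalG .hole C, r)
  | .evalLocal M e =>
      match decompose e with
      | none => e.toVal.map fun _ => (.simple .hole, .evalLocal M e)
      | some (C, r) =>
          if isCallInSimpleCtx C r then some (.simple .hole, .evalLocal M e)
          else some (.evalL .hole M C, r)

/-- Splits an argument list at its first non-value `e` into the preceding values, the
decomposition of `e`, and the remaining arguments. -/
def decomposeArgs : List Expr → Option (List Val × WCtx × Expr × List Expr)
  | [] => none
  | e :: es =>
      match e.toVal with
      | some v => (decomposeArgs es).map fun (vs, rest) => (v :: vs, rest)
      | none => (decompose e).map fun (C, r) => ([], C, r, es)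
end

@[simp]
lemma SCtx.comp_hole : ∀ X : SCtx, X.comp .hole = X
  | .hole => rfl
  | .seq X _ | .primArg _ _ X _ | .callee X _ | .callArg _ _ X _ => by
      simp [SCtx.comp, SCtx.comp_hole X]

lemma SCtx.comp_assoc : ∀ X₁ X₂ X₃ : SCtx, (X₁.comp X₂).comp X₃ = X₁.comp (X₂.comp X₃)
  | .hole, _, _ => rfl
  | .seq X _, _, _ | .primArg _ _ X _, _, _ | .callee X _, _, _ | .callArg _ _ X _, _, _ => by
      simp [SCtx.comp, SCtx.comp_assoc X]

@[simp]
lemma WCtx.under_hole (C : WCtx) : C.under .hole = C := by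
  cases C <;> rfl

lemma WCtx.under_under (C : WCtx) (X₁ X₂ : SCtx) :
    (C.under X₂).under X₁ = C.under (X₁.comp X₂) := by
  cases C <;> simp [WCtx.under, SCtx.comp_assoc]

lemma SCtx.toVal_plug {e : Expr} (h : e.toVal = none) (X : SCtx) : (X.plug e).toVal = none := by
  cases X <;> first | exact h | rfl

lemma Redex.toVal_toExpr (r : Redex) : r.toExpr.toVal = none := by
  cases r <;> rfl

lemma toVals_map_val (vs : List Val) : toVals (vs.map Expr.val) = some vs := by
  induction vs <;> simp_all [toVals, Expr.toVal]

lemma decomposeArgs_map_val (vs : List Val) : decomposeArgs (vs.map Expr.val) = none := by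
  induction vs <;> simp_all [decomposeArgs, Expr.toVal]

lemma decomposeArgs_append_cons {e : Expr} {C : WCtx} {r : Expr} (hv : e.toVal = none)
    (hd : decompose e = some (C, r)) (vs : List Val) (es : List Expr) :
    decomposeArgs (vs.map Expr.val ++ e :: es) = some (vs, C, r, es) := by
  induction vs <;> simp_all [decomposeArgs, Expr.toVal]

lemma SCtx.decompose_plug {e : Expr} {C : WCtx} {r : Expr} (hv : e.toVal = none)
    (hd : decompose e = some (C, r)) (X : SCtx) :
    decompose (X.plug e) = some (C.under X, r) := by
  induction X with
  | hole => simpa [SCtx.plug] using hd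
  | seq X e₂ ih | callee X es ih =>
      simp [SCtx.plug, decompose, SCtx.toVal_plug hv X, ih, WCtx.under_under, SCtx.comp]
  | primArg δ vs X es ih | callArg v vs X es ih =>
      simp [SCtx.plug, decompose, Expr.toVal,
        decomposeArgs_append_cons (SCtx.toVal_plug hv X) ih, WCtx.under_under, SCtx.comp]

lemma SCtx.decompose_plug_mkCall (X : SCtx) (m : String) (vs : List Val) :
    decompose (X.plug (mkCall m vs)) = some (.simple X, mkCall m vs) := by
  have hd : decompose (mkCall m vs) = some (.simple .hole, mkCall m vs) := by
    simp [mkCall, decompose, Expr.toVal, decomposeArgs_map_val]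
  simpa [WCtx.under] using SCtx.decompose_plug rfl hd X

lemma decompose_redex (r : Redex) : decompose r.toExpr = some (.simple .hole, r.toExpr) := by
  cases r with
  | globalCall X m vs | localCall M X m vs =>
      simp only [Redex.toExpr, decompose, SCtx.decompose_plug_mkCall]
      simp [isCallInSimpleCtx, mkCall, toVals_map_val]
  | _ => simp [Redex.toExpr, decompose, Expr.toVal, decomposeArgs_map_val]

lemma isCallInSimpleCtx_redex (C : WCtx) (r : Redex) : isCallInSimpleCtx C r.toExpr = false := by
  rcases C with X | ⟨X, C⟩ | ⟨X, M, C⟩ <;> try rfl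
  rcases r with _ | _ | _ | ⟨_ | m | _, vs, hv⟩ <;> first | rfl | exact absurd rfl (hv m)

theorem WCtx.decompose_plug_redex (C : WCtx) (r : Redex) :
    decompose (C.plug r.toExpr) = some (C, r.toExpr) := by
  induction C with
  | simple X =>
      simpa [WCtx.plug, WCtx.under] using SCtx.decompose_plug r.toVal_toExpr (decompose_redex r) X
  | evalG X C ih =>
      have hd : decompose (.evalGlobal (C.plug r.toExpr)) = some (.evalG .hole C, r.toExpr) := by
        simp [decompose, ih, isCallInSimpleCtx_redex]
      simpa [WCtx.plug, WCtx.under] using SCtx.decompose_plug rfl hd X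
  | evalL X M C ih =>
      have hd : decompose (.evalLocal M (C.plug r.toExpr)) = some (.evalL .hole M C, r.toExpr) := by
        simp [decompose, ih, isCallInSimpleCtx_redex]
      simpa [WCtx.plug, WCtx.under] using SCtx.decompose_plug rfl hd X

def contract (Δ : String → List Val → Option Val) (M : Table) (C : WCtx) :
    Expr → Option (Table × Expr)
  | .seq e₁ e₂ => e₁.toVal.map fun _ => (M, C.plug e₂)
  | .primCall δ args =>
      (toVals args).bind fun vs => (Δ δ vs).map fun v' => (M, C.plug (.val v'))
  | .mdef m ps b => some ((m, ps, b) :: M, C.plug (.val (.fn m)))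
  | .evalGlobal e =>
      match decompose e with
      | none => e.toVal.map fun v => (M, C.plug (.val v))
      | some (.simple X, .call (.val (.fn m)) args) =>
          (toVals args).map fun vs =>
            (M, C.plug (.evalGlobal (X.plug (.evalLocal M (mkCall m vs)))))
      | some _ => none
  | .evalLocal M' e =>
      match decompose e with
      | none => e.toVal.map fun v => (M, C.plug (.val v))
      | some (.simple X, .call (.val (.fn m)) args) =>
          (toVals args).bind fun vs =>
            (getmd M' m (vs.map Val.typeof)).map fun md =>
              (M, C.plug (.evalLocal M'
                (X.plug (md.2.2.subst (bindArgs md.2.1 (vs.map Expr.val))))))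
      | some _ => none
  | _ => none

def stepFn (Δ : String → List Val → Option Val) (M : Table) (e : Expr) : Option (Table × Expr) :=
  (decompose e).bind fun (C, r) => contract Δ M C r

section
variable {Δ : String → List Val → Option Val} {M : Table}

lemma stepFn_plug_redex (C : WCtx) (r : Redex) :
    stepFn Δ M (C.plug r.toExpr) = contract Δ M C r.toExpr := by
  simp [stepFn, WCtx.decompose_plug_redex]

lemma contract_primC (C : WCtx) (δ : String) (vs : List Val) :
    contract Δ M C (Redex.primC δ vs).toExpr = (Δ δ vs).map fun v' => (M, C.plug (.val v')) := by
  simp [Redex.toExpr, contract, toVals_map_val]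

lemma contract_localCall (C : WCtx) (M' : Table) (X : SCtx) (m : String) (vs : List Val) :
    contract Δ M C (Redex.localCall M' X m vs).toExpr =
      (getmd M' m (vs.map Val.typeof)).map fun md =>
        (M, C.plug (.evalLocal M'
          (X.plug (md.2.2.subst (bindArgs md.2.1 (vs.map Expr.val)))))) := by
  simp only [Redex.toExpr, contract, SCtx.decompose_plug_mkCall]
  simp [mkCall, toVals_map_val]

lemma Step.stepFn_eq {e : Expr} {M' : Table} {e' : Expr} (h : Step Δ M e M' e') :
    stepFn Δ M e = some (M', e') := by
  cases h with
  | seqStep _ C v e => exact stepFn_plug_redex C (.seqV v e)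
  | @primStep δ vs _ _ C hΔ =>
      exact (stepFn_plug_redex C (.primC δ vs)).trans (by simp [contract_primC, hΔ])
  | mdefStep _ C m ps b => exact stepFn_plug_redex C (.mdefR m ps b)
  | callGlobal _ C X m vs =>
      refine (stepFn_plug_redex C (.globalCall X m vs)).trans ?_
      simp only [Redex.toExpr, contract, SCtx.decompose_plug_mkCall]
      simp [mkCall, toVals_map_val]
  | @callLocal M' m vs _ _ C X hget =>
      exact (stepFn_plug_redex C (.localCall M' X m vs)).trans (by simp [contract_localCall, hget])
  | valGlobal _ C v => exact stepFn_plug_redex C (.globalVal v)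
  | valLocal _ M' C v => exact stepFn_plug_redex C (.localVal M' v)

lemma StepErr.stepFn_eq_none {e : Expr} (h : StepErr Δ M e) : stepFn Δ M e = none := by
  cases h with
  | varErr _ C x => exact stepFn_plug_redex C (.var x)
  | @primErr δ vs _ C hΔ =>
      exact (stepFn_plug_redex C (.primC δ vs)).trans (by simp [contract_primC, hΔ])
  | calleeErr _ C vs hv => exact stepFn_plug_redex C (.callNonFn _ vs hv)
  | @callErr M' m vs _ C X hget =>
      exact (stepFn_plug_redex C (.localCall M' X m vs)).trans (by simp [contract_localCall, hget])

end

/-- Determinism. -/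
theorem determinism (Δ : String → List Val → Option Val) (Mg : Table) (e : Expr) :
    (∀ (Mg₁ : Table) (e₁ : Expr) (Mg₂ : Table) (e₂ : Expr),
        Step Δ Mg e Mg₁ e₁ → Step Δ Mg e Mg₂ e₂ → Mg₁ = Mg₂ ∧ e₁ = e₂) ∧
    ¬ ((∃ (Mg' : Table) (e' : Expr), Step Δ Mg e Mg' e') ∧ StepErr Δ Mg e) := by
  refine ⟨fun M₁ e₁ M₂ e₂ h₁ h₂ => ?_, fun ⟨⟨M', e', hs⟩, he⟩ => ?_⟩
  · simpa using h₁.stepFn_eq.symm.trans h₂.stepFn_eq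
  · simpa using hs.stepFn_eq.symm.trans he.stepFn_eq_none

end Juliette
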